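/- For every b ∈ ℂ with 4b³ + 27 ≠ 0, the quotient ring ℂ[x,y]/(3x² + 2bxy³, 3bx²y² + 9y⁸) is a finite-dimensional ℂ-vector space of dimension 16. -/

import Mathlib

/-!
The classes of the sixteen monomials `x^i y^j` with `i < 2`, `j < 8` form a basis of the
Milnor ring.

They span it because, modulo the Jacobian ideal, `3x² ≡ -2bxy³` and `9y⁸ ≡ 2b²xy⁵`, while
`xy⁸` and `x²y⁵` lie in the ideal as soon as `4b³ + 27 ≠ 0`; so multiplying one of the sixteen
classes by `x` or by `y` stays in their span.

They are independent by Macaulay duality. Polynomials act on polynomials by contraction,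
`x^d ⌟ x^e = x^(e - d)` (zero unless `d ≤ e`), and both generators of the Jacobian ideal
annihilate `F = 2b²y¹⁰ + 9xy⁷ - 6bx²y⁴ + 4b²x³y`, so contraction against `F` factors through
the Milnor ring. The sixteen contractions `x^i y^j ⌟ F` are independent: comparing coefficients
leaves six equations in a single unknown and five `2 × 2` systems, each of determinant
`-3(4b³ + 27)`.
-/

open MvPolynomial

namespace MvPolynomial

section Contraction

variable {σ R : Type*} [CommSemiring R]

noncomputable def contractMonomial (d : σ →₀ ℕ) : Module.End R (MvPolynomial σ R) where
  toFun F := AddMonoidAlgebra.comapDomain (· + d) (add_left_injective d) F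
  map_add' := AddMonoidAlgebra.comapDomain_add _ _
  map_smul' r F := by ext e; simp [coeff]

theorem coeff_contractMonomial (d e : σ →₀ ℕ) (F : MvPolynomial σ R) :
    coeff e (contractMonomial d F) = coeff (e + d) F := by
  simp [contractMonomial, coeff]

noncomputable def contractMonomialHom :
    Multiplicative (σ →₀ ℕ) →* Module.End R (MvPolynomial σ R) where
  toFun d := contractMonomial d.toAdd
  map_one' := LinearMap.ext fun F => MvPolynomial.ext _ _ fun e => by
    simp [coeff_contractMonomial]
  map_mul' d d' := LinearMap.ext fun F => MvPolynomial.ext _ _ fun e => by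
    simp only [Module.End.mul_apply, coeff_contractMonomial, toAdd_mul]; ac_rfl

noncomputable def contract : MvPolynomial σ R →ₐ[R] Module.End R (MvPolynomial σ R) :=
  AddMonoidAlgebra.lift R (Module.End R (MvPolynomial σ R)) (σ →₀ ℕ) contractMonomialHom

theorem contract_monomial (d : σ →₀ ℕ) (r : R) :
    contract (monomial d r) = r • contractMonomial d := by
  simp only [contract, monomial, AddMonoidAlgebra.lsingle_apply, AddMonoidAlgebra.lift_single]
  rfl

theorem coeff_contract_monomial (d e : σ →₀ ℕ) (r : R) (F : MvPolynomial σ R) :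
    coeff e (contract (monomial d r) F) = r * coeff (e + d) F := by
  rw [contract_monomial, LinearMap.smul_apply, coeff_smul, coeff_contractMonomial, smul_eq_mul]

theorem contractMonomial_monomial [DecidableEq σ] (d e : σ →₀ ℕ) (s : R) :
    contractMonomial d (monomial e s) = if d ≤ e then monomial (e - d) s else 0 := by
  ext e'
  rw [coeff_contractMonomial, coeff_monomial]
  split_ifs with h₁ h₂ h₂
  · rw [coeff_monomial, if_pos (tsub_eq_of_eq_add h₁)]
  · exact absurd (h₁ ▸ le_add_self) h₂
  · rw [coeff_monomial, if_neg fun h => h₁ (tsub_eq_iff_eq_add_of_le h₂ |>.1 h)]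
  · rfl

theorem contract_monomial_monomial [DecidableEq σ] (d e : σ →₀ ℕ) (r s : R) :
    contract (monomial d r) (monomial e s) = if d ≤ e then monomial (e - d) (r * s) else 0 := by
  rw [contract_monomial, LinearMap.smul_apply, contractMonomial_monomial]
  split_ifs <;> simp [smul_monomial]

def contractAnnihilator (F : MvPolynomial σ R) : Ideal (MvPolynomial σ R) where
  carrier := {p | contract p F = 0}
  add_mem' {p q} hp hq := by simp_all
  zero_mem' := by simp
  smul_mem' c p hp := by simp_all [smul_eq_mul, map_mul]

end Contraction

theorem linearIndependent_mk_of_le_contractAnnihilator {σ R ι : Type*} [CommRing R]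
    {F : MvPolynomial σ R} {I : Ideal (MvPolynomial σ R)} (hI : I ≤ contractAnnihilator F)
    {v : ι → MvPolynomial σ R} (hv : LinearIndependent R fun i => contract (v i) F) :
    LinearIndependent R fun i => Ideal.Quotient.mk I (v i) := by
  let g : (MvPolynomial σ R ⧸ I) →ₗ[R] MvPolynomial σ R :=
    (Submodule.liftQ (I.restrictScalars R) (LinearMap.applyₗ F ∘ₗ contract.toLinearMap)
      fun p hp => hI hp).comp (Submodule.Quotient.restrictScalarsEquiv R I).symm.toLinearMap
  exact LinearIndependent.of_comp g hv

noncomputable def finTwoExp (a c : ℕ) : Fin 2 →₀ ℕ := Finsupp.single 0 a + Finsupp.single 1 c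

@[simp] theorem finTwoExp_eq_finTwoExp_iff {a c a' c' : ℕ} :
    finTwoExp a c = finTwoExp a' c' ↔ a = a' ∧ c = c' := by
  simp [finTwoExp, Finsupp.ext_iff, Fin.forall_fin_two]

@[simp] theorem finTwoExp_le_finTwoExp_iff {a c a' c' : ℕ} :
    finTwoExp a c ≤ finTwoExp a' c' ↔ a ≤ a' ∧ c ≤ c' := by
  simp [finTwoExp, Finsupp.le_def, Fin.forall_fin_two]

@[simp] theorem finTwoExp_sub_finTwoExp (a c a' c' : ℕ) :
    finTwoExp a c - finTwoExp a' c' = finTwoExp (a - a') (c - c') := by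
  ext i; fin_cases i <;> simp [finTwoExp]

@[simp] theorem finTwoExp_add_finTwoExp (a c a' c' : ℕ) :
    finTwoExp a c + finTwoExp a' c' = finTwoExp (a + a') (c + c') := by
  ext i; fin_cases i <;> simp [finTwoExp]

section FinTwo

variable {R : Type*} [CommSemiring R]

theorem monomial_finTwoExp (a c : ℕ) (r : R) :
    monomial (finTwoExp a c) r = C r * X 0 ^ a * X 1 ^ c := by
  rw [mul_assoc, X_pow_eq_monomial, X_pow_eq_monomial, monomial_mul, one_mul, C_mul_monomial,
    mul_one, finTwoExp]

theorem X_zero_pow_mul_X_one_pow (a c : ℕ) :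
    (X 0 ^ a * X 1 ^ c : MvPolynomial (Fin 2) R) = monomial (finTwoExp a c) 1 := by
  simp [monomial_finTwoExp]

end FinTwo

end MvPolynomial

theorem Submodule.span_range_eq_top_of_mul_mem {R A ι : Type*} [CommSemiring R] [Semiring A]
    [Algebra R A] {s : Set A} (hs : Algebra.adjoin R s = ⊤) {v : ι → A}
    (h1 : 1 ∈ span R (Set.range v)) (hv : ∀ i, ∀ x ∈ s, v i * x ∈ span R (Set.range v)) :
    span R (Set.range v) = ⊤ := by
  set M := span R (Set.range v)
  have hmul : ∀ x ∈ s, ∀ m ∈ M, m * x ∈ M := fun x hx m hm => by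
    induction hm using Submodule.span_induction with
    | mem m hm => obtain ⟨i, rfl⟩ := hm; exact hv i x hx
    | zero => simp
    | add m m' _ _ h h' => rw [add_mul]; exact M.add_mem h h'
    | smul r m _ h => rw [smul_mul_assoc]; exact M.smul_mem r h
  refine eq_top_iff'.2 fun a => ?_
  have ha : a ∈ Algebra.adjoin R s := hs ▸ Algebra.mem_top
  suffices ∀ m ∈ M, m * a ∈ M by simpa using this 1 h1
  induction ha using Algebra.adjoin_induction with
  | mem x hx => exact hmul x hx
  | algebraMap r => intro m hm; rw [← Algebra.commutes, ← Algebra.smul_def]; exact M.smul_mem r hm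
  | add x y _ _ hx hy => intro m hm; rw [mul_add]; exact M.add_mem (hx m hm) (hy m hm)
  | mul x y _ _ hx hy => intro m hm; rw [← mul_assoc]; exact hy _ (hx m hm)

theorem Submodule.mem_of_smul_add_smul_eq_zero {K V : Type*} [DivisionRing K] [AddCommGroup V]
    [Module K V] (M : Submodule K V) {c d : K} {u w : V} (hc : c ≠ 0) (h : c • u + d • w = 0)
    (hw : w ∈ M) : u ∈ M := by
  rw [← M.smul_mem_iff hc, eq_neg_of_add_eq_zero_left h]
  exact M.neg_mem (M.smul_mem d hw)

theorem Ideal.Quotient.adjoin_range_mkₐ_X_eq_top {σ R : Type*} [CommRing R]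
    (I : Ideal (MvPolynomial σ R)) :
    Algebra.adjoin R (Set.range fun i => Ideal.Quotient.mkₐ R I (X i)) = ⊤ := by
  rw [Set.range_comp', Algebra.adjoin_image, adjoin_range_X, Algebra.map_top,
    AlgHom.range_eq_top]
  exact Ideal.Quotient.mkₐ_surjective R I

namespace J30

open Submodule

section CommRing

variable {K : Type*} [CommRing K]

noncomputable def fx (b : K) : MvPolynomial (Fin 2) K := 3 * X 0 ^ 2 + 2 * C b * X 0 * X 1 ^ 3

noncomputable def fy (b : K) : MvPolynomial (Fin 2) K := 3 * C b * X 0 ^ 2 * X 1 ^ 2 + 9 * X 1 ^ 8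

noncomputable def jacobianIdeal (b : K) : Ideal (MvPolynomial (Fin 2) K) := Ideal.span {fx b, fy b}

noncomputable def dualGenerator (b : K) : MvPolynomial (Fin 2) K :=
  monomial (finTwoExp 0 10) (2 * b ^ 2) + monomial (finTwoExp 1 7) 9 +
    monomial (finTwoExp 2 4) (-6 * b) + monomial (finTwoExp 3 1) (4 * b ^ 2)

theorem fx_eq (b : K) : fx b = monomial (finTwoExp 2 0) 3 + monomial (finTwoExp 1 3) (2 * b) := by
  simp only [fx, monomial_finTwoExp, map_mul, map_ofNat]; ring

theorem fy_eq (b : K) : fy b = monomial (finTwoExp 2 2) (3 * b) + monomial (finTwoExp 0 8) 9 := by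
  simp only [fy, monomial_finTwoExp, map_mul, map_ofNat]; ring

theorem contract_fx (b : K) : contract (fx b) (dualGenerator b) = 0 := by
  simp only [fx_eq, dualGenerator, map_add, LinearMap.add_apply, contract_monomial_monomial]
  norm_num [monomial_finTwoExp, map_ofNat C]
  ring

theorem contract_fy (b : K) : contract (fy b) (dualGenerator b) = 0 := by
  simp only [fy_eq, dualGenerator, map_add, LinearMap.add_apply, contract_monomial_monomial]
  norm_num [monomial_finTwoExp, map_ofNat C]
  ring

theorem jacobianIdeal_le_contractAnnihilator (b : K) :
    jacobianIdeal b ≤ contractAnnihilator (dualGenerator b) := by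
  rw [jacobianIdeal, Ideal.span_le, Set.insert_subset_iff, Set.singleton_subset_iff]
  exact ⟨contract_fx b, contract_fy b⟩

variable {b : K}

theorem smul_mk_X_zero_sq_mul_X_one_pow_add (j : ℕ) :
    (3 : K) • Ideal.Quotient.mk (jacobianIdeal b) (X 0 ^ 2 * X 1 ^ j) +
      (2 * b) • Ideal.Quotient.mk (jacobianIdeal b) (X 0 * X 1 ^ (j + 3)) = 0 := by
  have key : X 1 ^ j * fx b = (3 : K) • (X 0 ^ 2 * X 1 ^ j) + (2 * b) • (X 0 * X 1 ^ (j + 3)) := by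
    simp only [fx, smul_eq_C_mul, map_mul, map_ofNat]
    ring
  rw [← Ideal.Quotient.mkₐ_eq_mk K, ← map_smul, ← map_smul, ← map_add, ← key,
    Ideal.Quotient.mkₐ_eq_mk, Ideal.Quotient.eq_zero_iff_mem]
  exact Ideal.mul_mem_left _ _ (Ideal.subset_span (by simp))

theorem smul_mk_X_one_pow_eight_add :
    (9 : K) • Ideal.Quotient.mk (jacobianIdeal b) (X 1 ^ 8) +
      (-2 * b ^ 2) • Ideal.Quotient.mk (jacobianIdeal b) (X 0 * X 1 ^ 5) = 0 := by
  have key : fy b - C b * X 1 ^ 2 * fx b = (9 : K) • X 1 ^ 8 + (-2 * b ^ 2) • (X 0 * X 1 ^ 5) := by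
    simp only [fx, fy, smul_eq_C_mul, map_mul, map_neg, map_pow, map_ofNat]
    ring
  rw [← Ideal.Quotient.mkₐ_eq_mk K, ← map_smul, ← map_smul, ← map_add, ← key,
    Ideal.Quotient.mkₐ_eq_mk, Ideal.Quotient.eq_zero_iff_mem]
  exact sub_mem (Ideal.subset_span (by simp)) (Ideal.mul_mem_left _ _ (Ideal.subset_span (by simp)))

variable (b) in
noncomputable def standardMonomial (k : Fin 2 × Fin 8) :
    MvPolynomial (Fin 2) K ⧸ jacobianIdeal b :=
  Ideal.Quotient.mk _ (X 0 ^ (k.1 : ℕ) * X 1 ^ (k.2 : ℕ))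

theorem mk_mem_span_standardMonomial {i j : ℕ} (hi : i < 2) (hj : j < 8) :
    Ideal.Quotient.mk (jacobianIdeal b) (X 0 ^ i * X 1 ^ j) ∈
      span K (Set.range (standardMonomial b)) :=
  subset_span ⟨(⟨i, hi⟩, ⟨j, hj⟩), rfl⟩

theorem mk_mem_span_standardMonomial_of_mem {p : MvPolynomial (Fin 2) K}
    (hp : p ∈ jacobianIdeal b) :
    Ideal.Quotient.mk (jacobianIdeal b) p ∈ span K (Set.range (standardMonomial b)) := by
  rw [Ideal.Quotient.eq_zero_iff_mem.2 hp]
  exact zero_mem _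

end CommRing

variable {K : Type*} [Field K] {b : K}

theorem X_zero_mul_X_one_pow_eight_mem (hb : 4 * b ^ 3 + 27 ≠ 0) :
    X 0 * X 1 ^ 8 ∈ jacobianIdeal b := by
  have key : C (4 * b ^ 3 + 27) * (X 0 * X 1 ^ 8) =
      (2 * C b ^ 2 * X 1 ^ 5 - 3 * C b * X 0 * X 1 ^ 2) * fx b + 3 * X 0 * fy b := by
    simp only [fx, fy, map_add, map_mul, map_pow, map_ofNat]
    ring
  refine (Ideal.unit_mul_mem_iff_mem _ ((isUnit_iff_ne_zero.2 hb).map C)).1 ?_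
  rw [key]
  exact add_mem (Ideal.mul_mem_left _ _ (Ideal.subset_span (by simp)))
    (Ideal.mul_mem_left _ _ (Ideal.subset_span (by simp)))

variable [CharZero K]

theorem X_zero_sq_mul_X_one_pow_mem (hb : 4 * b ^ 3 + 27 ≠ 0) {j : ℕ} (hj : 5 ≤ j) :
    X 0 ^ 2 * X 1 ^ j ∈ jacobianIdeal b := by
  obtain ⟨j, rfl⟩ := Nat.exists_eq_add_of_le hj
  have key : C (3 : K) * (X 0 ^ 2 * X 1 ^ (5 + j)) =
      X 1 ^ (5 + j) * fx b - 2 * C b * X 1 ^ j * (X 0 * X 1 ^ 8) := by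
    simp only [fx, map_ofNat]
    ring
  refine (Ideal.unit_mul_mem_iff_mem _ ((isUnit_iff_ne_zero.2 three_ne_zero).map C)).1 ?_
  rw [key]
  exact sub_mem (Ideal.mul_mem_left _ _ (Ideal.subset_span (by simp)))
    (Ideal.mul_mem_left _ _ (X_zero_mul_X_one_pow_eight_mem hb))

theorem standardMonomial_mul_X_zero_mem_span (hb : 4 * b ^ 3 + 27 ≠ 0) (k : Fin 2 × Fin 8) :
    standardMonomial b k * Ideal.Quotient.mk _ (X 0) ∈ span K (Set.range (standardMonomial b)) := by
  obtain ⟨⟨i, hi⟩, ⟨j, hj⟩⟩ := k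
  rw [standardMonomial, ← map_mul]
  obtain rfl | rfl : i = 0 ∨ i = 1 := by omega
  · convert mk_mem_span_standardMonomial (b := b) one_lt_two hj using 2
    ring
  · rw [show (X 0 ^ 1 * X 1 ^ j * X 0 : MvPolynomial (Fin 2) K) = X 0 ^ 2 * X 1 ^ j by ring]
    rcases lt_or_ge j 5 with hj5 | hj5
    · exact mem_of_smul_add_smul_eq_zero _ three_ne_zero (smul_mk_X_zero_sq_mul_X_one_pow_add j)
        (by simpa using mk_mem_span_standardMonomial one_lt_two (show j + 3 < 8 by omega))
    · exact mk_mem_span_standardMonomial_of_mem (X_zero_sq_mul_X_one_pow_mem hb hj5)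

theorem standardMonomial_mul_X_one_mem_span (hb : 4 * b ^ 3 + 27 ≠ 0) (k : Fin 2 × Fin 8) :
    standardMonomial b k * Ideal.Quotient.mk _ (X 1) ∈ span K (Set.range (standardMonomial b)) := by
  obtain ⟨⟨i, hi⟩, ⟨j, hj⟩⟩ := k
  rw [standardMonomial, ← map_mul, mul_assoc, ← pow_succ]
  rcases lt_or_ge j 7 with hj7 | hj7
  · exact mk_mem_span_standardMonomial (j := j + 1) hi (by omega)
  obtain rfl : j = 7 := by omega
  obtain rfl | rfl : i = 0 ∨ i = 1 := by omega
  · rw [pow_zero, one_mul]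
    exact mem_of_smul_add_smul_eq_zero _ (by norm_num) smul_mk_X_one_pow_eight_add
      (by simpa using mk_mem_span_standardMonomial one_lt_two (show 5 < 8 by omega))
  · exact mk_mem_span_standardMonomial_of_mem (by simpa using X_zero_mul_X_one_pow_eight_mem hb)

theorem span_standardMonomial_eq_top (hb : 4 * b ^ 3 + 27 ≠ 0) :
    span K (Set.range (standardMonomial b)) = ⊤ := by
  refine span_range_eq_top_of_mul_mem (Ideal.Quotient.adjoin_range_mkₐ_X_eq_top _)
    (by simpa using mk_mem_span_standardMonomial (b := b) two_pos (by norm_num : 0 < 8)) ?_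
  rintro k _ ⟨n, rfl⟩
  fin_cases n
  exacts [standardMonomial_mul_X_zero_mem_span hb k, standardMonomial_mul_X_one_mem_span hb k]

theorem pair_eq_zero (hb : 4 * b ^ 3 + 27 ≠ 0) (u v : K) (h₁ : 2 * b ^ 2 * u + 9 * v = 0)
    (h₂ : 9 * u - 6 * b * v = 0) : u = 0 ∧ v = 0 := by
  have hdet : (3 : K) * (4 * b ^ 3 + 27) ≠ 0 := mul_ne_zero three_ne_zero hb
  constructor
  · refine (mul_eq_zero.1 ?_).resolve_left hdet
    linear_combination 6 * b * h₁ + 9 * h₂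
  · refine (mul_eq_zero.1 ?_).resolve_left hdet
    linear_combination 9 * h₁ - 2 * b ^ 2 * h₂

theorem linearIndependent_contract_dualGenerator (hb : 4 * b ^ 3 + 27 ≠ 0) :
    LinearIndependent K fun k : Fin 2 × Fin 8 =>
      contract (X 0 ^ (k.1 : ℕ) * X 1 ^ (k.2 : ℕ)) (dualGenerator b) := by
  rw [Fintype.linearIndependent_iff]
  intro c hc
  have coeff_eq (α γ : ℕ) :
      ∑ k : Fin 2 × Fin 8, c k * coeff (finTwoExp (α + k.1) (γ + k.2)) (dualGenerator b) = 0 := by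
    simpa [X_zero_pow_mul_X_one_pow, coeff_sum, coeff_contract_monomial] using
      congrArg (coeff (finTwoExp α γ)) hc
  -- the coefficients at the sixteen exponents of the box itself already force `c = 0`
  have key (α : Fin 2) (γ : Fin 8) := coeff_eq α γ
  simp only [dualGenerator, neg_mul, map_neg, coeff_add, coeff_monomial,
    finTwoExp_eq_finTwoExp_iff, coeff_neg, Fintype.sum_prod_type, Fin.sum_univ_succ, Fin.isValue,
    Fin.coe_ofNat_eq_mod, Nat.zero_mod, add_zero, Fin.val_succ, Fin.succ_zero_eq_one, zero_add,
    Nat.reduceEqDiff, Nat.right_eq_add, Fin.val_eq_zero_iff, Fin.succ_one_eq_two, Nat.reduceAdd,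
    Nat.add_eq_zero_iff, one_ne_zero, and_false, ↓reduceIte, Fin.reduceSucc, OfNat.ofNat_ne_zero,
    neg_zero, Finset.univ_unique, Fin.default_eq_zero, Fin.val_eq_zero, Finset.sum_singleton,
    false_and, mul_ite, mul_zero, Fin.forall_fin_succ, OfNat.zero_ne_ofNat, and_true, zero_ne_one,
    mul_neg, Fin.succ_ne_zero, Nat.add_eq_right, OfNat.one_ne_ofNat, forall_const, mul_eq_zero,
    or_false, OfNat.ofNat_ne_one] at key
  obtain ⟨⟨h17, h16, h15, e₄, e₃, e₂, e₁, e₀⟩, f₄, f₃, f₂, f₁, f₀, h02, h01, h00⟩ := key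
  obtain ⟨h07, h14⟩ := pair_eq_zero hb (c (0, 7)) (c (1, 4))
    (by linear_combination e₄) (by linear_combination f₄)
  obtain ⟨h06, h13⟩ := pair_eq_zero hb (c (0, 6)) (c (1, 3))
    (by linear_combination e₃) (by linear_combination f₃)
  obtain ⟨h05, h12⟩ := pair_eq_zero hb (c (0, 5)) (c (1, 2))
    (by linear_combination e₂) (by linear_combination f₂)
  obtain ⟨h04, h11⟩ := pair_eq_zero hb (c (0, 4)) (c (1, 1))
    (by linear_combination e₁) (by linear_combination f₁)
  obtain ⟨h03, h10⟩ := pair_eq_zero hb (c (0, 3)) (c (1, 0))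
    (by linear_combination e₀) (by linear_combination f₀)
  rintro ⟨i, j⟩
  fin_cases i <;> fin_cases j <;> assumption

theorem linearIndependent_standardMonomial (hb : 4 * b ^ 3 + 27 ≠ 0) :
    LinearIndependent K (standardMonomial b) :=
  linearIndependent_mk_of_le_contractAnnihilator (jacobianIdeal_le_contractAnnihilator b)
    (linearIndependent_contract_dualGenerator hb)

end J30

/-- For every `b` with `4b³ + 27 ≠ 0`, the Milnor ring
`ℂ[x,y]/(3x² + 2bxy³, 3bx²y² + 9y⁸)` of `J₃,₀ = x³ + bx²y³ + y⁹` has dimension 16. -/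
theorem milnor_ring_J30_dim (b : ℂ) (hb : 4 * b ^ 3 + 27 ≠ 0) :
    FiniteDimensional ℂ (MvPolynomial (Fin 2) ℂ ⧸
      Ideal.span ({(3 : MvPolynomial (Fin 2) ℂ) * X 0 ^ 2 + 2 * C b * X 0 * X 1 ^ 3,
        3 * C b * X 0 ^ 2 * X 1 ^ 2 + 9 * X 1 ^ 8} : Set (MvPolynomial (Fin 2) ℂ))) ∧
    Module.finrank ℂ (MvPolynomial (Fin 2) ℂ ⧸
      Ideal.span ({(3 : MvPolynomial (Fin 2) ℂ) * X 0 ^ 2 + 2 * C b * X 0 * X 1 ^ 3,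
        3 * C b * X 0 ^ 2 * X 1 ^ 2 + 9 * X 1 ^ 8} : Set (MvPolynomial (Fin 2) ℂ))) = 16 := by
  let B := Module.Basis.mk (J30.linearIndependent_standardMonomial hb)
    (J30.span_standardMonomial_eq_top hb).ge
  exact ⟨.of_basis B, (Module.finrank_eq_card_basis B).trans rfl⟩
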